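/- Let n ∈ ℕ, let K ⊆ ℝⁿ be Lebesgue measurable with n-dimensional Lebesgue measure μ(K) = 1, and let p ∈ (1, ∞]. Then the Lebesgue space L^p(K) is not multigeodesic; in fact, there is exactly one geodesic from 0 to the element of L^p(K) represented by the constant function 1 (the indicator function χ_K of K). -/

import Mathlib

open MeasureTheory ENNReal

/-- A geodesic from `u` to `v` in a metric space `X`: a map `γ : [0,1] → X` with
`γ 0 = u`, `γ 1 = v` and `d(γ s, γ t) = |s - t| * d(u,v)` for all `s, t ∈ [0,1]`. -/
def IsGeodesic {X : Type*} [MetricSpace X] (u v : X) (γ : unitInterval → X) : Prop :=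
  γ 0 = u ∧ γ 1 = v ∧
    ∀ s t : unitInterval, dist (γ s) (γ t) = |(s : ℝ) - (t : ℝ)| * dist u v

/-- A metric space is multigeodesic if between any two distinct points there are
at least two distinct geodesics. -/
def Multigeodesic (X : Type*) [MetricSpace X] : Prop :=
  ∀ u v : X, u ≠ v → ∃ γ σ : unitInterval → X,
    IsGeodesic u v γ ∧ IsGeodesic u v σ ∧ γ ≠ σ

/-!
The segment `t ↦ t • χ` is a geodesic from `0` to `χ = 1`, and every geodesic passes at time `t`
through a point `f` with `‖f‖ = t` and `‖χ - f‖ = 1 - t`; it suffices to show that such an `f`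
equals `t` a.e. For `p = ∞` this is pointwise: `|f| ≤ t` and `|1 - f| ≤ 1 - t` force `f = t`.
For `1 < p < ∞`, convexity of `x ↦ x ^ p` gives pointwise
`t (|f| / t) ^ p + (1 - t) (|1 - f| / (1 - t)) ^ p ≥ (|f| + |1 - f|) ^ p ≥ 1`,
while the left side integrates to `t + (1 - t) = 1`. Hence equality holds a.e., and strict
convexity then forces `|f| = t` and `|1 - f| = 1 - t`, i.e. `f = t`.
-/

namespace IsGeodesic

variable {X : Type*} [MetricSpace X] {u v : X} {γ σ : unitInterval → X}

lemma dist_left (hγ : IsGeodesic u v γ) (t : unitInterval) : dist u (γ t) = t * dist u v := by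
  have h := hγ.2.2 0 t
  rwa [hγ.1, Set.Icc.coe_zero, zero_sub, abs_neg, abs_of_nonneg t.2.1] at h

lemma dist_right (hγ : IsGeodesic u v γ) (t : unitInterval) :
    dist (γ t) v = (1 - t) * dist u v := by
  have h := hγ.2.2 t 1
  rwa [hγ.2.1, Set.Icc.coe_one, abs_sub_comm, abs_of_nonneg (sub_nonneg.2 t.2.2)] at h

lemma eq_of_forall_dist_eq (hγ : IsGeodesic u v γ) (hσ : IsGeodesic u v σ)
    (h : ∀ (t : unitInterval) (x : X), (t : ℝ) ∈ Set.Ioo 0 1 → dist u x = t * dist u v →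
      dist x v = (1 - t) * dist u v → x = γ t) :
    σ = γ := by
  funext t
  rcases eq_or_lt_of_le t.2.1 with ht0 | ht0
  · obtain rfl : t = 0 := Subtype.ext ht0.symm
    rw [hσ.1, hγ.1]
  rcases eq_or_lt_of_le t.2.2 with ht1 | ht1
  · obtain rfl : t = 1 := Subtype.ext ht1
    rw [hσ.2.1, hγ.2.1]
  exact h t (σ t) ⟨ht0, ht1⟩ (hσ.dist_left t) (hσ.dist_right t)

end IsGeodesic

lemma isGeodesic_lineMap {E : Type*} [NormedAddCommGroup E] [NormedSpace ℝ E] (u v : E) :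
    IsGeodesic u v fun t => AffineMap.lineMap u v (t : ℝ) := by
  refine ⟨by simp, by simp, fun s t => ?_⟩
  rw [dist_lineMap_lineMap, Real.dist_eq]

lemma not_multigeodesic_of_existsUnique {X : Type*} [MetricSpace X] {u v : X} (huv : u ≠ v)
    (h : ∃! γ, IsGeodesic u v γ) : ¬ Multigeodesic X := fun hX =>
  let ⟨_, _, hγ, hσ, hne⟩ := hX u v huv
  hne (h.unique hγ hσ)

namespace Real

open Set

variable {q s x y : ℝ}

lemma one_le_convexComb_rpow (hq : 1 < q) (hs : s ∈ Ioo 0 1) (hx : 0 ≤ x) (hy : 0 ≤ y)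
    (hxy : 1 ≤ s * x + (1 - s) * y) : 1 ≤ s * x ^ q + (1 - s) * y ^ q := by
  have hconv := (strictConvexOn_rpow hq).convexOn.2 (mem_Ici.2 hx) (mem_Ici.2 hy)
    hs.1.le (sub_nonneg.2 hs.2.le) (add_sub_cancel s 1)
  simp only [smul_eq_mul] at hconv
  exact (one_le_rpow hxy (by linarith)).trans hconv

lemma eq_one_of_convexComb_rpow_eq_one (hq : 1 < q) (hs : s ∈ Ioo 0 1) (hx : 0 ≤ x)
    (hy : 0 ≤ y) (hxy : 1 ≤ s * x + (1 - s) * y) (h : s * x ^ q + (1 - s) * y ^ q = 1) :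
    x = 1 ∧ y = 1 := by
  obtain rfl : x = y := by
    by_contra hne
    have hconv := (strictConvexOn_rpow hq).2 (mem_Ici.2 hx) (mem_Ici.2 hy) hne
      hs.1 (sub_pos.2 hs.2) (add_sub_cancel s 1)
    simp only [smul_eq_mul] at hconv
    linarith [one_le_rpow hxy (by linarith : 0 ≤ q)]
  have hx1 : 1 ≤ x := by linarith
  have hxq : x ^ q = 1 := by linarith
  have : x = 1 := by
    by_contra hne
    linarith [one_lt_rpow (lt_of_le_of_ne hx1 (Ne.symm hne)) (by linarith : 0 < q)]
  exact ⟨this, this⟩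

end Real

namespace MeasureTheory.Lp

variable {α : Type*} [MeasurableSpace α] {μ : Measure α}

lemma integral_norm_rpow_toReal {E : Type*} [NormedAddCommGroup E] {p : ℝ≥0∞}
    (hp0 : p ≠ 0) (hp : p ≠ ∞) (f : Lp E p μ) :
    ∫ x, ‖f x‖ ^ p.toReal ∂μ = ‖f‖ ^ p.toReal := by
  rw [norm_def, toReal_eLpNorm (Lp.aestronglyMeasurable f),
    lpNorm_eq_integral_norm_rpow_toReal hp0 hp (Lp.aestronglyMeasurable f),
    Real.rpow_inv_rpow (integral_nonneg fun _ => by positivity)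
      (ENNReal.toReal_pos hp0 hp).ne']

lemma ae_norm_le_norm_top {E : Type*} [NormedAddCommGroup E] (f : Lp E ∞ μ) :
    ∀ᵐ x ∂μ, ‖f x‖ ≤ ‖f‖ := by
  simpa only [norm_def, toReal_eLpNorm (Lp.aestronglyMeasurable f)] using
    ae_le_lpNorm_exponent_top (Lp.memLp f)

variable {s : ℝ}

lemma ae_eq_const_of_norm_le_of_norm_le_top {f g : Lp ℝ ∞ μ}
    (hfg : ∀ᵐ x ∂μ, f x + g x = 1) (hf : ‖f‖ ≤ s) (hg : ‖g‖ ≤ 1 - s) :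
    f =ᵐ[μ] fun _ => s := by
  filter_upwards [ae_norm_le_norm_top f, ae_norm_le_norm_top g, hfg] with x hfx hgx hx
  rw [Real.norm_eq_abs] at hfx hgx
  linarith [abs_le.1 (hfx.trans hf), abs_le.1 (hgx.trans hg)]

variable {p : ℝ≥0∞}

lemma integrable_div_norm_rpow_toReal (hp0 : p ≠ 0) (hp : p ≠ ∞) (f : Lp ℝ p μ) {c : ℝ}
    (hc : 0 ≤ c) : Integrable (fun x => (‖f x‖ / c) ^ p.toReal) μ := by
  simp_rw [Real.div_rpow (norm_nonneg _) hc]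
  exact ((Lp.memLp f).integrable_norm_rpow hp0 hp).div_const _

lemma integral_div_norm_rpow_toReal (hp0 : p ≠ 0) (hp : p ≠ ∞) (f : Lp ℝ p μ) {c : ℝ}
    (hc : 0 ≤ c) : ∫ x, (‖f x‖ / c) ^ p.toReal ∂μ = ‖f‖ ^ p.toReal / c ^ p.toReal := by
  simp_rw [Real.div_rpow (norm_nonneg _) hc]
  rw [integral_div, integral_norm_rpow_toReal hp0 hp]

lemma ae_eq_const_of_norm_eq_of_norm_eq_of_ne_top [IsProbabilityMeasure μ] (hp : 1 < p)
    (hpt : p ≠ ∞) {f g : Lp ℝ p μ} (hfg : ∀ᵐ x ∂μ, f x + g x = 1) (hs : s ∈ Set.Ioo 0 1)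
    (hf : ‖f‖ = s) (hg : ‖g‖ = 1 - s) : f =ᵐ[μ] fun _ => s := by
  have hp0 : p ≠ 0 := (zero_lt_one.trans hp).ne'
  have hq : 1 < p.toReal := by
    simpa using (ENNReal.toReal_lt_toReal ENNReal.one_ne_top hpt).2 hp
  have hs' : 0 < 1 - s := sub_pos.2 hs.2
  set F : α → ℝ := fun x => s * (‖f x‖ / s) ^ p.toReal + (1 - s) * (‖g x‖ / (1 - s)) ^ p.toReal
  have hf_int := (integrable_div_norm_rpow_toReal hp0 hpt f hs.1.le).const_mul s
  have hg_int := (integrable_div_norm_rpow_toReal hp0 hpt g hs'.le).const_mul (1 - s)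
  have hF_integral : ∫ x, F x ∂μ = ∫ _, (1 : ℝ) ∂μ := by
    rw [integral_add hf_int hg_int, integral_const_mul, integral_const_mul,
      integral_div_norm_rpow_toReal hp0 hpt f hs.1.le,
      integral_div_norm_rpow_toReal hp0 hpt g hs'.le, hf, hg,
      div_self (Real.rpow_pos_of_pos hs.1 _).ne', div_self (Real.rpow_pos_of_pos hs' _).ne',
      integral_const]
    simp
  have hf_nonneg : ∀ x, 0 ≤ ‖f x‖ / s := fun x => div_nonneg (norm_nonneg _) hs.1.le
  have hg_nonneg : ∀ x, 0 ≤ ‖g x‖ / (1 - s) := fun x => div_nonneg (norm_nonneg _) hs'.le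
  have hsum : ∀ᵐ x ∂μ, 1 ≤ s * (‖f x‖ / s) + (1 - s) * (‖g x‖ / (1 - s)) := by
    filter_upwards [hfg] with x hx
    rw [mul_div_cancel₀ _ hs.1.ne', mul_div_cancel₀ _ hs'.ne']
    simpa [hx] using norm_add_le (f x) (g x)
  have hF_ge : ∀ᵐ x ∂μ, (1 : ℝ) ≤ F x := by
    filter_upwards [hsum] with x hx
    exact Real.one_le_convexComb_rpow hq hs (hf_nonneg x) (hg_nonneg x) hx
  have hF_eq :=
    (integral_eq_iff_of_ae_le (integrable_const 1) (hf_int.add hg_int) hF_ge).1 hF_integral.symm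
  filter_upwards [hfg, hsum, hF_eq] with x hx hxsum hFx
  obtain ⟨hfx, hgx⟩ := Real.eq_one_of_convexComb_rpow_eq_one hq hs (hf_nonneg x)
    (hg_nonneg x) hxsum hFx.symm
  rw [div_eq_one_iff_eq hs.1.ne', Real.norm_eq_abs] at hfx
  rw [div_eq_one_iff_eq hs'.ne', Real.norm_eq_abs] at hgx
  linarith [abs_le.1 hfx.le, abs_le.1 hgx.le]

lemma ae_eq_const_of_norm_eq_of_norm_eq [IsProbabilityMeasure μ] (hp : 1 < p)
    {f g : Lp ℝ p μ} (hfg : ∀ᵐ x ∂μ, f x + g x = 1) (hs : s ∈ Set.Ioo 0 1) (hf : ‖f‖ = s)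
    (hg : ‖g‖ = 1 - s) : f =ᵐ[μ] fun _ => s := by
  rcases eq_or_ne p ∞ with rfl | hpt
  · exact ae_eq_const_of_norm_le_of_norm_le_top hfg hf.le hg.le
  · exact ae_eq_const_of_norm_eq_of_norm_eq_of_ne_top hp hpt hfg hs hf hg

lemma eq_smul_of_norm_eq_of_dist_eq [IsProbabilityMeasure μ] (hp : 1 < p) [Fact (1 ≤ p)]
    {χ f : Lp ℝ p μ} (hχ : χ =ᵐ[μ] 1) (hs : s ∈ Set.Ioo 0 1) (hf : ‖f‖ = s)
    (hfχ : dist f χ = 1 - s) : f = s • χ := by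
  have hfg : ∀ᵐ x ∂μ, f x + (χ - f) x = 1 := by
    filter_upwards [coeFn_sub χ f, hχ] with x hsub hχx
    rw [hsub, Pi.sub_apply, hχx, Pi.one_apply, add_sub_cancel]
  have hf_const := ae_eq_const_of_norm_eq_of_norm_eq hp hfg hs hf
    (by rwa [dist_eq_norm'] at hfχ)
  refine Lp.ext (hf_const.trans ?_)
  filter_upwards [coeFn_smul s χ, hχ] with x hsmul hχx
  rw [hsmul, Pi.smul_apply, hχx, Pi.one_apply, smul_eq_mul, mul_one]

end MeasureTheory.Lp

theorem statement10 (n : ℕ) (K : Set (Fin n → ℝ))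
    (hK : MeasurableSet K) (hvol : volume K = 1)
    (p : ℝ≥0∞) (hp : 1 < p) [Fact (1 ≤ p)] :
    ¬ Multigeodesic (Lp ℝ p (volume.restrict K)) ∧
      ∃! γ : unitInterval → Lp ℝ p (volume.restrict K),
        IsGeodesic 0
          (indicatorConstLp p hK
            (by rw [Measure.restrict_apply_self, hvol]; exact ENNReal.one_ne_top) (1 : ℝ))
          γ := by
  have : IsProbabilityMeasure (volume.restrict K) :=
    ⟨by rw [Measure.restrict_apply_univ, hvol]⟩
  set χ := indicatorConstLp p hK
    (by rw [Measure.restrict_apply_self, hvol]; exact ENNReal.one_ne_top) (1 : ℝ)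
  have hχ : χ =ᵐ[volume.restrict K] 1 :=
    indicatorConstLp_coeFn.trans (indicator_ae_eq_restrict hK)
  have hχ_norm : ‖χ‖ = 1 := by
    rw [norm_indicatorConstLp' (zero_lt_one.trans hp).ne' (by simp [hvol])]
    simp [measureReal_def, hvol]
  have hunique : ∃! γ, IsGeodesic 0 χ γ := by
    refine ⟨_, isGeodesic_lineMap 0 χ, fun σ hσ =>
      (isGeodesic_lineMap 0 χ).eq_of_forall_dist_eq hσ fun t f ht hf hfχ => ?_⟩
    simp only [dist_zero_left, hχ_norm, mul_one] at hf hfχ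
    rw [AffineMap.lineMap_apply_module', sub_zero, add_zero]
    exact Lp.eq_smul_of_norm_eq_of_dist_eq hp hχ ht hf hfχ
  have hχ_ne : (0 : Lp ℝ p (volume.restrict K)) ≠ χ :=
    (norm_ne_zero_iff.1 (by simp [hχ_norm])).symm
  exact ⟨not_multigeodesic_of_existsUnique hχ_ne hunique, hunique⟩
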